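/- arXiv:1705.08880 — 2 statements merged into one kernel-verified Lean document; each statement's English description precedes it below -/
import Mathlib

section
/- Let a > 0 and let u be a 1-form in H^1(B_O(1)) on the hyperbolic plane H^2(-a^2), with pullback u^♯ to the Poincaré disk via the chart Y. Then the Euclidean Dirichlet energy of u^♯ on the disk of radius tanh(a/2) satisfies ||∇^{R²} u^♯||²_{L²(D₀(tanh(a/2)))} ≤ 32·{ (1/a²)·cosh⁴(a/2)·||∇u||²_{L²(B_O(1))} + sinh²(a)·||u||²_{L²(B_O(1))} }. -/
open Real MeasureTheory

/-- Euclidean disk of radius r centered at the origin of ℝ × ℝ. -/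
def disk (r : ℝ) : Set (ℝ × ℝ) := {y | y.1 ^ 2 + y.2 ^ 2 < r ^ 2}

/-- Euclidean partial derivatives on ℝ × ℝ. -/
noncomputable def pd1 (f : ℝ × ℝ → ℝ) (y : ℝ × ℝ) : ℝ := fderiv ℝ f y (1, 0)
noncomputable def pd2 (f : ℝ × ℝ → ℝ) (y : ℝ × ℝ) : ℝ := fderiv ℝ f y (0, 1)

/-- Components of the covariant derivative ∇u of the 1-form u = u₁dY¹ + u₂dY² in the
Poincaré disk chart (with respect to the frame dYʲ ⊗ dYᵏ). -/
noncomputable def cov11 (u₁ u₂ : ℝ × ℝ → ℝ) (y : ℝ × ℝ) : ℝ :=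
  pd1 u₁ y - 2 * y.1 * u₁ y / (1 - (y.1 ^ 2 + y.2 ^ 2)) + 2 * y.2 * u₂ y / (1 - (y.1 ^ 2 + y.2 ^ 2))
noncomputable def cov12 (u₁ u₂ : ℝ × ℝ → ℝ) (y : ℝ × ℝ) : ℝ :=
  pd1 u₂ y - 2 * y.2 * u₁ y / (1 - (y.1 ^ 2 + y.2 ^ 2)) - 2 * y.1 * u₂ y / (1 - (y.1 ^ 2 + y.2 ^ 2))
noncomputable def cov21 (u₁ u₂ : ℝ × ℝ → ℝ) (y : ℝ × ℝ) : ℝ :=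
  pd2 u₁ y - 2 * y.2 * u₁ y / (1 - (y.1 ^ 2 + y.2 ^ 2)) - 2 * y.1 * u₂ y / (1 - (y.1 ^ 2 + y.2 ^ 2))
noncomputable def cov22 (u₁ u₂ : ℝ × ℝ → ℝ) (y : ℝ × ℝ) : ℝ :=
  pd2 u₂ y + 2 * y.1 * u₁ y / (1 - (y.1 ^ 2 + y.2 ^ 2)) - 2 * y.2 * u₂ y / (1 - (y.1 ^ 2 + y.2 ^ 2))

/-! In the disk chart each partial derivative `∂ⱼuₖ` is the covariant component `(∇u)ⱼₖ` plus
a Christoffel term of size `2|y||u|/(1-|y|²)`; the four Christoffel terms have total square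
`8|y|²|u|²/(1-|y|²)²`. With `(p + q)² ≤ 2p² + 2q²` this bounds the Euclidean Dirichlet density
pointwise. On `D₀(tanh(a/2))` one has `|y|² cosh²(a/2) < sinh²(a/2)`, hence
`1 < cosh²(a/2)(1-|y|²)`, which turns both terms into the weights of the hyperbolic norms;
integrating over the disk gives the estimate. -/

lemma measurableSet_disk (r : ℝ) : MeasurableSet (disk r) :=
  measurableSet_lt (by fun_prop) (by fun_prop)

lemma normSq_mul_cosh_sq_lt_sinh_sq {t : ℝ} {y : ℝ × ℝ} (hy : y ∈ disk (tanh t)) :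
    (y.1 ^ 2 + y.2 ^ 2) * cosh t ^ 2 < sinh t ^ 2 := by
  have hy : y.1 ^ 2 + y.2 ^ 2 < (sinh t / cosh t) ^ 2 := by rwa [← tanh_eq_sinh_div_cosh]
  rwa [div_pow, lt_div_iff₀ (by positivity)] at hy

lemma one_lt_cosh_sq_mul_one_sub_normSq {t : ℝ} {y : ℝ × ℝ} (hy : y ∈ disk (tanh t)) :
    1 < cosh t ^ 2 * (1 - (y.1 ^ 2 + y.2 ^ 2)) := by
  linarith [normSq_mul_cosh_sq_lt_sinh_sq hy, cosh_sq_sub_sinh_sq t]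

noncomputable def dirichletDensity (u₁ u₂ : ℝ × ℝ → ℝ) (y : ℝ × ℝ) : ℝ :=
  (pd1 u₁ y) ^ 2 + (pd1 u₂ y) ^ 2 + (pd2 u₁ y) ^ 2 + (pd2 u₂ y) ^ 2

noncomputable def covSqSum (u₁ u₂ : ℝ × ℝ → ℝ) (y : ℝ × ℝ) : ℝ :=
  (cov11 u₁ u₂ y) ^ 2 + (cov12 u₁ u₂ y) ^ 2 + (cov21 u₁ u₂ y) ^ 2 + (cov22 u₁ u₂ y) ^ 2

lemma add_sq_le_two_mul_add (p q : ℝ) : (p + q) ^ 2 ≤ 2 * p ^ 2 + 2 * q ^ 2 := by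
  nlinarith [sq_nonneg (p - q)]

/-- Holds for every `y`: where `1 - |y|² = 0`, each division is the junk value `0`. -/
lemma dirichletDensity_le (u₁ u₂ : ℝ × ℝ → ℝ) (y : ℝ × ℝ) :
    dirichletDensity u₁ u₂ y ≤ 2 * covSqSum u₁ u₂ y +
      16 * (y.1 ^ 2 + y.2 ^ 2) * (u₁ y ^ 2 + u₂ y ^ 2) / (1 - (y.1 ^ 2 + y.2 ^ 2)) ^ 2 := by
  set s := 1 - (y.1 ^ 2 + y.2 ^ 2)
  set w₁ := (2 * y.1 * u₁ y - 2 * y.2 * u₂ y) / s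
  set w₂ := (2 * y.2 * u₁ y + 2 * y.1 * u₂ y) / s
  have h₁₁ : pd1 u₁ y = cov11 u₁ u₂ y + w₁ := by unfold cov11; ring
  have h₁₂ : pd1 u₂ y = cov12 u₁ u₂ y + w₂ := by unfold cov12; ring
  have h₂₁ : pd2 u₁ y = cov21 u₁ u₂ y + w₂ := by unfold cov21; ring
  have h₂₂ : pd2 u₂ y = cov22 u₁ u₂ y - w₁ := by unfold cov22; ring
  -- `w₁ + i w₂ = 2 (y₁ + i y₂)(u₁ + i u₂) / s`, so `w₁² + w₂²` is a product of moduli.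
  have hw : 2 * w₁ ^ 2 + 2 * w₂ ^ 2 =
      8 * (y.1 ^ 2 + y.2 ^ 2) * (u₁ y ^ 2 + u₂ y ^ 2) / s ^ 2 := by
    simp only [w₁, w₂, div_pow]
    rw [mul_div_assoc', mul_div_assoc', ← add_div]
    ring
  calc dirichletDensity u₁ u₂ y
      = (cov11 u₁ u₂ y + w₁) ^ 2 + (cov12 u₁ u₂ y + w₂) ^ 2 + (cov21 u₁ u₂ y + w₂) ^ 2
          + (cov22 u₁ u₂ y + -w₁) ^ 2 := by
        rw [dirichletDensity, h₁₁, h₁₂, h₂₁, h₂₂, sub_eq_add_neg]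
    _ ≤ 2 * covSqSum u₁ u₂ y + 2 * (2 * w₁ ^ 2 + 2 * w₂ ^ 2) := by
        rw [covSqSum]
        linarith [add_sq_le_two_mul_add (cov11 u₁ u₂ y) w₁,
          add_sq_le_two_mul_add (cov12 u₁ u₂ y) w₂, add_sq_le_two_mul_add (cov21 u₁ u₂ y) w₂,
          add_sq_le_two_mul_add (cov22 u₁ u₂ y) (-w₁)]
    _ = _ := by rw [hw]; ring

lemma dirichletDensity_le_of_mem_disk {a : ℝ} (ha : a ≠ 0) (u₁ u₂ : ℝ × ℝ → ℝ) {y : ℝ × ℝ}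
    (hy : y ∈ disk (tanh (a / 2))) :
    dirichletDensity u₁ u₂ y ≤
      32 * (1 / a ^ 2) * cosh (a / 2) ^ 4 *
          ((a ^ 2 * (1 - (y.1 ^ 2 + y.2 ^ 2)) ^ 2 / 4) * covSqSum u₁ u₂ y)
        + 32 * sinh a ^ 2 * (u₁ y ^ 2 + u₂ y ^ 2) := by
  set C := cosh (a / 2)
  set S := sinh (a / 2)
  set x := y.1 ^ 2 + y.2 ^ 2
  set s := 1 - x
  have hx : x * C ^ 2 < S ^ 2 := normSq_mul_cosh_sq_lt_sinh_sq hy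
  have hCs : 1 < C ^ 2 * s := one_lt_cosh_sq_mul_one_sub_normSq hy
  have hs : 0 < s := pos_of_mul_pos_right (one_pos.trans hCs) (by positivity)
  have hCs' : 1 ≤ C ^ 4 * s ^ 2 := by nlinarith
  have hxs : x / s ^ 2 ≤ S ^ 2 * C ^ 2 := by
    rw [div_le_iff₀ (by positivity)]
    nlinarith [sq_nonneg y.1, sq_nonneg y.2]
  have hcov : 0 ≤ covSqSum u₁ u₂ y := by rw [covSqSum]; positivity
  have hsinh : sinh a = 2 * S * C := by rw [← sinh_two_mul]; ring_nf
  calc dirichletDensity u₁ u₂ y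
      ≤ 2 * covSqSum u₁ u₂ y + 16 * (x / s ^ 2) * (u₁ y ^ 2 + u₂ y ^ 2) := by
        convert dirichletDensity_le u₁ u₂ y using 2; ring
    _ ≤ 8 * (C ^ 4 * s ^ 2) * covSqSum u₁ u₂ y + 128 * (S ^ 2 * C ^ 2) * (u₁ y ^ 2 + u₂ y ^ 2) := by
        gcongr <;> linarith
    _ = _ := by rw [hsinh]; field_simp; ring

lemma setIntegral_le_mul_add_mul {α : Type*} [MeasurableSpace α] {μ : Measure α} {s : Set α}
    {f g h : α → ℝ} {c d : ℝ} (hs : MeasurableSet s) (hf : IntegrableOn f s μ)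
    (hg : IntegrableOn g s μ) (hh : IntegrableOn h s μ) (hle : ∀ x ∈ s, f x ≤ c * g x + d * h x) :
    ∫ x in s, f x ∂μ ≤ c * ∫ x in s, g x ∂μ + d * ∫ x in s, h x ∂μ := by
  rw [← integral_const_mul, ← integral_const_mul,
    ← integral_add (hg.const_mul c) (hh.const_mul d)]
  exact setIntegral_mono_on hf ((hg.const_mul c).add (hh.const_mul d)) hs hle

theorem stmt_12_general (a : ℝ) (ha : 0 < a) (u₁ u₂ : ℝ × ℝ → ℝ)
    (hint1 : IntegrableOn
      (fun y => (pd1 u₁ y) ^ 2 + (pd1 u₂ y) ^ 2 + (pd2 u₁ y) ^ 2 + (pd2 u₂ y) ^ 2)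
      (disk (Real.tanh (a / 2))))
    (hint2 : IntegrableOn
      (fun y => (a ^ 2 * (1 - (y.1 ^ 2 + y.2 ^ 2)) ^ 2 / 4) *
        ((cov11 u₁ u₂ y) ^ 2 + (cov12 u₁ u₂ y) ^ 2 + (cov21 u₁ u₂ y) ^ 2 + (cov22 u₁ u₂ y) ^ 2))
      (disk (Real.tanh (a / 2))))
    (hint3 : IntegrableOn (fun y => (u₁ y) ^ 2 + (u₂ y) ^ 2) (disk (Real.tanh (a / 2)))) :
    (∫ y in disk (Real.tanh (a / 2)),
        ((pd1 u₁ y) ^ 2 + (pd1 u₂ y) ^ 2 + (pd2 u₁ y) ^ 2 + (pd2 u₂ y) ^ 2))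
      ≤ 32 * ((1 / a ^ 2) * Real.cosh (a / 2) ^ 4 *
            (∫ y in disk (Real.tanh (a / 2)),
              (a ^ 2 * (1 - (y.1 ^ 2 + y.2 ^ 2)) ^ 2 / 4) *
                ((cov11 u₁ u₂ y) ^ 2 + (cov12 u₁ u₂ y) ^ 2 +
                  (cov21 u₁ u₂ y) ^ 2 + (cov22 u₁ u₂ y) ^ 2))
          + Real.sinh a ^ 2 *
            (∫ y in disk (Real.tanh (a / 2)), ((u₁ y) ^ 2 + (u₂ y) ^ 2))) := by
  have h := setIntegral_le_mul_add_mul (measurableSet_disk _) hint1 hint2 hint3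
    fun _ hy => dirichletDensity_le_of_mem_disk ha.ne' u₁ u₂ hy
  linarith

/-- The squared hyperbolic pointwise norm |∇u|ₐ², written in the chart:
|∇u|ₐ² = (a²(1-|y|²)²/4)² Σᵢⱼ covᵢⱼ², so that ∫_{B_O(1)} |∇u|ₐ² dVol equals
∫_{D₀(tanh(a/2))} (a²(1-|y|²)²/4)·Σᵢⱼ covᵢⱼ² dy (the conformal volume factor is
4/(a²(1-|y|²)²)).  Likewise ∫_{B_O(1)} |u|ₐ² dVol = ∫_{D₀(tanh(a/2))} (u₁²+u₂²) dy.

Lemma 3.1: ‖∇^{ℝ²}u^♯‖²_{L²(D₀(tanh(a/2)))} ≤ 32{ (1/a²)cosh⁴(a/2)‖∇u‖²_{L²(B_O(1))}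
+ sinh²a·‖u‖²_{L²(B_O(1))} }. -/
theorem stmt_12 (a : ℝ) (ha : 0 < a) (u₁ u₂ : ℝ × ℝ → ℝ)
    (hu₁ : DifferentiableOn ℝ u₁ (disk (Real.tanh (a / 2))))
    (hu₂ : DifferentiableOn ℝ u₂ (disk (Real.tanh (a / 2))))
    (hint1 : IntegrableOn
      (fun y => (pd1 u₁ y) ^ 2 + (pd1 u₂ y) ^ 2 + (pd2 u₁ y) ^ 2 + (pd2 u₂ y) ^ 2)
      (disk (Real.tanh (a / 2))))
    (hint2 : IntegrableOn
      (fun y => (a ^ 2 * (1 - (y.1 ^ 2 + y.2 ^ 2)) ^ 2 / 4) *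
        ((cov11 u₁ u₂ y) ^ 2 + (cov12 u₁ u₂ y) ^ 2 + (cov21 u₁ u₂ y) ^ 2 + (cov22 u₁ u₂ y) ^ 2))
      (disk (Real.tanh (a / 2))))
    (hint3 : IntegrableOn (fun y => (u₁ y) ^ 2 + (u₂ y) ^ 2) (disk (Real.tanh (a / 2)))) :
    (∫ y in disk (Real.tanh (a / 2)),
        ((pd1 u₁ y) ^ 2 + (pd1 u₂ y) ^ 2 + (pd2 u₁ y) ^ 2 + (pd2 u₂ y) ^ 2))
      ≤ 32 * ((1 / a ^ 2) * Real.cosh (a / 2) ^ 4 *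
            (∫ y in disk (Real.tanh (a / 2)),
              (a ^ 2 * (1 - (y.1 ^ 2 + y.2 ^ 2)) ^ 2 / 4) *
                ((cov11 u₁ u₂ y) ^ 2 + (cov12 u₁ u₂ y) ^ 2 +
                  (cov21 u₁ u₂ y) ^ 2 + (cov22 u₁ u₂ y) ^ 2))
          + Real.sinh a ^ 2 *
            (∫ y in disk (Real.tanh (a / 2)), ((u₁ y) ^ 2 + (u₂ y) ^ 2))) :=
  stmt_12_general a ha u₁ u₂ hint1 hint2 hint3
end

section
/- Let a > 0. For a 1-form u on the geodesic ball B_O(1) in H^2(-a^2) with components u₁, u₂ in the Poincaré disk chart Y, the pointwise estimate |∂u₁^♯/∂y¹| ≤ (4/(a²(1-|y|²)²))·(|∇u|_a ∘ Y^{-1}) + 4|y|·|u^♯|/(1-|y|²) holds on D₀(tanh(a/2)). -/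
open Real

/-- The hyperbolic pointwise norm |∇u|ₐ in the chart: since the frame elements dYʲ⊗dYᵏ
have hyperbolic norm a²(1-|y|²)²/4, we have |∇u|ₐ = (a²(1-|y|²)²/4)·√(Σᵢⱼ covᵢⱼ²). -/
noncomputable def covNorm (a : ℝ) (u₁ u₂ : ℝ × ℝ → ℝ) (y : ℝ × ℝ) : ℝ :=
  (a ^ 2 * (1 - (y.1 ^ 2 + y.2 ^ 2)) ^ 2 / 4) *
    Real.sqrt ((cov11 u₁ u₂ y) ^ 2 + (cov12 u₁ u₂ y) ^ 2 +
      (cov21 u₁ u₂ y) ^ 2 + (cov22 u₁ u₂ y) ^ 2)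

/-
Solving the definition of `cov11` for the Euclidean derivative gives
∂u₁/∂y¹ = (∇u)₁₁ + 2(y¹u₁ - y²u₂)/(1 - |y|²). The first term is bounded by the Euclidean
length of the coefficient matrix of ∇u, which is |∇u|ₐ rescaled by the frame norm
a²(1 - |y|²)²/4; the Christoffel term is bounded by Cauchy–Schwarz. The disk D₀(tanh(a/2))
lies inside the unit disk, so 1 - |y|² > 0 throughout.
-/

lemma abs_mul_sub_mul_le_sqrt_mul_sqrt (x₁ x₂ v₁ v₂ : ℝ) :
    |x₁ * v₁ - x₂ * v₂| ≤ √(x₁ ^ 2 + x₂ ^ 2) * √(v₁ ^ 2 + v₂ ^ 2) := by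
  rw [← Real.sqrt_mul (by positivity)]
  apply Real.abs_le_sqrt
  nlinarith [sq_nonneg (x₁ * v₂ + x₂ * v₁)]

lemma pd1_eq_cov11_add (u₁ u₂ : ℝ × ℝ → ℝ) (y : ℝ × ℝ) :
    pd1 u₁ y = cov11 u₁ u₂ y
      + 2 * (y.1 * u₁ y - y.2 * u₂ y) / (1 - (y.1 ^ 2 + y.2 ^ 2)) := by
  rw [cov11]
  ring

lemma abs_cov11_le (u₁ u₂ : ℝ × ℝ → ℝ) (y : ℝ × ℝ) :
    |cov11 u₁ u₂ y| ≤ √(cov11 u₁ u₂ y ^ 2 + cov12 u₁ u₂ y ^ 2 +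
      cov21 u₁ u₂ y ^ 2 + cov22 u₁ u₂ y ^ 2) := by
  apply Real.abs_le_sqrt
  nlinarith [sq_nonneg (cov12 u₁ u₂ y), sq_nonneg (cov21 u₁ u₂ y), sq_nonneg (cov22 u₁ u₂ y)]

lemma covNorm_rescale {a : ℝ} (ha : a ≠ 0) (u₁ u₂ : ℝ × ℝ → ℝ) {y : ℝ × ℝ}
    (hs : 1 - (y.1 ^ 2 + y.2 ^ 2) ≠ 0) :
    4 / (a ^ 2 * (1 - (y.1 ^ 2 + y.2 ^ 2)) ^ 2) * covNorm a u₁ u₂ y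
      = √(cov11 u₁ u₂ y ^ 2 + cov12 u₁ u₂ y ^ 2 + cov21 u₁ u₂ y ^ 2 + cov22 u₁ u₂ y ^ 2) := by
  rw [covNorm]
  field_simp

theorem stmt_13_general (a : ℝ) (ha : 0 < a) (u₁ u₂ : ℝ × ℝ → ℝ) (y : ℝ × ℝ)
    (hy : y.1 ^ 2 + y.2 ^ 2 < Real.tanh (a / 2) ^ 2) :
    |pd1 u₁ y| ≤ (4 / (a ^ 2 * (1 - (y.1 ^ 2 + y.2 ^ 2)) ^ 2)) * covNorm a u₁ u₂ y
      + 4 * Real.sqrt (y.1 ^ 2 + y.2 ^ 2) *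
          Real.sqrt ((u₁ y) ^ 2 + (u₂ y) ^ 2) / (1 - (y.1 ^ 2 + y.2 ^ 2)) := by
  have hs : 0 < 1 - (y.1 ^ 2 + y.2 ^ 2) := by linarith [Real.tanh_sq_lt_one (a / 2)]
  have christoffel : |2 * (y.1 * u₁ y - y.2 * u₂ y)| ≤
      2 * √(y.1 ^ 2 + y.2 ^ 2) * √(u₁ y ^ 2 + u₂ y ^ 2) := by
    rw [abs_mul, abs_two, mul_assoc]
    gcongr
    exact abs_mul_sub_mul_le_sqrt_mul_sqrt _ _ _ _
  rw [covNorm_rescale ha.ne' u₁ u₂ hs.ne', pd1_eq_cov11_add u₁ u₂ y]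
  calc _ ≤ |cov11 u₁ u₂ y| + |2 * (y.1 * u₁ y - y.2 * u₂ y) / (1 - (y.1 ^ 2 + y.2 ^ 2))| :=
        abs_add_le _ _
    _ ≤ _ := by
        rw [abs_div, abs_of_pos hs]
        gcongr
        · exact abs_cov11_le u₁ u₂ y
        · exact christoffel.trans (by gcongr; norm_num)

/-- Pointwise estimate on D₀(tanh(a/2)):
|∂u₁/∂y¹| ≤ (4/(a²(1-|y|²)²))·|∇u|ₐ + 4|y||u^♯|/(1-|y|²). -/
theorem stmt_13 (a : ℝ) (ha : 0 < a) (u₁ u₂ : ℝ × ℝ → ℝ) (y : ℝ × ℝ)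
    (hy : y.1 ^ 2 + y.2 ^ 2 < Real.tanh (a / 2) ^ 2)
    (hd1 : DifferentiableAt ℝ u₁ y) (hd2 : DifferentiableAt ℝ u₂ y) :
    |pd1 u₁ y| ≤ (4 / (a ^ 2 * (1 - (y.1 ^ 2 + y.2 ^ 2)) ^ 2)) * covNorm a u₁ u₂ y
      + 4 * Real.sqrt (y.1 ^ 2 + y.2 ^ 2) *
          Real.sqrt ((u₁ y) ^ 2 + (u₂ y) ^ 2) / (1 - (y.1 ^ 2 + y.2 ^ 2)) :=
  stmt_13_general a ha u₁ u₂ y hy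
end
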